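/- arXiv:2510.07855 — 5 statements merged into one kernel-verified Lean document; each statement's English description precedes it below -/
import Mathlib

section
/- Every invertible matrix in the max-plus algebra M_n(ℝ₊) (with max as addition and usual multiplication, identity matrix I) is a generalized permutation matrix, i.e., a product of a diagonal matrix with positive diagonal entries and a permutation matrix. -/
open Matrix Finset

/-!
If `A ⊗ B = I`, each diagonal entry `max_k a_ik b_ki = 1` yields a column `f i` with
`a_{i, f i} > 0` and `b_{f i, i} > 0`, while each off-diagonal entry `0` forbids
`a_ik > 0 ∧ b_kj > 0` for `i ≠ j`. The second fact makes `f` injective, hence a permutation,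
and shows that `f i` is the only column in which row `i` of `A` is positive.
-/

noncomputable section

/-- Max-plus matrix product: `(A ⊗ B) i j = max_k (A i k * B k j)`. -/
def mMul {n : ℕ} (A B : Matrix (Fin n) (Fin n) NNReal) : Matrix (Fin n) (Fin n) NNReal :=
  fun i j => Finset.univ.sup fun k => A i k * B k j

/-- Entrywise maximum of matrices. -/
def msup {n : ℕ} (A B : Matrix (Fin n) (Fin n) NNReal) : Matrix (Fin n) (Fin n) NNReal :=
  fun i j => max (A i j) (B i j)

/-- Max-plus powers. -/
def mPow {n : ℕ} (A : Matrix (Fin n) (Fin n) NNReal) : ℕ → Matrix (Fin n) (Fin n) NNReal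
  | 0 => 1
  | k + 1 => mMul A (mPow A k)

/-- Conjugation by the permutation matrix of `σ` : `(P⁻¹AP) i j = A (σ i) (σ j)`. -/
def conjP {n : ℕ} (σ : Equiv.Perm (Fin n)) (A : Matrix (Fin n) (Fin n) NNReal) :
    Matrix (Fin n) (Fin n) NNReal := fun i j => A (σ i) (σ j)

/-- Upper triangular. -/
def UpperTri {n : ℕ} (M : Matrix (Fin n) (Fin n) NNReal) : Prop :=
  ∀ i j : Fin n, j < i → M i j = 0

/-- Edge relation of the digraph `G_A`. -/
def Edge {n : ℕ} (A : Matrix (Fin n) (Fin n) NNReal) (i j : Fin n) : Prop := 0 < A i j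

/-- `G_A` has no directed cycle passing through at least two distinct vertices. -/
def NoMultiVertexCycle {n : ℕ} (A : Matrix (Fin n) (Fin n) NNReal) : Prop :=
  ∀ i j : Fin n, i ≠ j →
    ¬(Relation.TransGen (Edge A) i j ∧ Relation.TransGen (Edge A) j i)

/-- Triangularizable via a permutation matrix. -/
def Triangularizable {n : ℕ} (A : Matrix (Fin n) (Fin n) NNReal) : Prop :=
  ∃ σ : Equiv.Perm (Fin n), UpperTri (conjP σ A)

/-- Simultaneously triangularizable via one permutation matrix. -/
def SimTriangularizable {n : ℕ} (A B : Matrix (Fin n) (Fin n) NNReal) : Prop :=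
  ∃ σ : Equiv.Perm (Fin n), UpperTri (conjP σ A) ∧ UpperTri (conjP σ B)

/-- Max-plus nilpotency. -/
def MNilpotent {n : ℕ} (A : Matrix (Fin n) (Fin n) NNReal) : Prop :=
  ∃ k : ℕ, mPow A k = 0

/-- Tropical determinant. -/
def tdet {n : ℕ} (M : Matrix (Fin n) (Fin n) NNReal) : NNReal :=
  Finset.univ.sup fun σ : Equiv.Perm (Fin n) => ∏ i, M i (σ i)

/-- The matrix `M(z) = I ⊕ z₁A ⊕ z₂B`. -/
def Mz {n : ℕ} (A B : Matrix (Fin n) (Fin n) NNReal) (z₁ z₂ : NNReal) :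
    Matrix (Fin n) (Fin n) NNReal :=
  fun i j => max (max ((1 : Matrix (Fin n) (Fin n) NNReal) i j) (z₁ * A i j)) (z₂ * B i j)

lemma mMul_apply_eq_zero_iff {n : ℕ} (A B : Matrix (Fin n) (Fin n) NNReal) (i j : Fin n) :
    mMul A B i j = 0 ↔ ∀ k, A i k * B k j = 0 := by
  show (univ.sup fun k => A i k * B k j) = 0 ↔ _
  simp only [← bot_eq_zero', Finset.sup_eq_bot_iff, mem_univ, true_implies]

section RightInverse

variable {n : ℕ} {A B : Matrix (Fin n) (Fin n) NNReal}

lemma exists_pos_pos_of_mMul_eq_one (h : mMul A B = 1) (i : Fin n) :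
    ∃ k, 0 < A i k ∧ 0 < B k i := by
  have hii : mMul A B i i ≠ 0 := by simp [h]
  obtain ⟨k, hk⟩ := not_forall.mp (mt (mMul_apply_eq_zero_iff A B i i).mpr hii)
  exact ⟨k, pos_of_ne_zero (left_ne_zero_of_mul hk), pos_of_ne_zero (right_ne_zero_of_mul hk)⟩

lemma eq_of_pos_of_pos_of_mMul_eq_one (h : mMul A B = 1) {i j k : Fin n}
    (hA : 0 < A i k) (hB : 0 < B k j) : i = j := by
  by_contra hij
  have hzero : mMul A B i j = 0 := by simp [h, one_apply, hij]
  exact (mul_pos hA hB).ne' ((mMul_apply_eq_zero_iff A B i j).mp hzero k)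

end RightInverse

theorem stmt0 {n : ℕ} (A : Matrix (Fin n) (Fin n) NNReal)
    (hinv : ∃ B : Matrix (Fin n) (Fin n) NNReal, mMul A B = 1 ∧ mMul B A = 1) :
    ∃ (d : Fin n → NNReal) (σ : Equiv.Perm (Fin n)),
      (∀ i, 0 < d i) ∧ ∀ i j, A i j = if σ i = j then d i else 0 := by
  obtain ⟨B, hAB, -⟩ := hinv
  choose f hfA hfB using exists_pos_pos_of_mMul_eq_one hAB
  have hf : Function.Bijective f := Finite.injective_iff_bijective.mp fun i i' hii' =>
    eq_of_pos_of_pos_of_mMul_eq_one hAB (hfA i) (hii' ▸ hfB i')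
  refine ⟨fun i => A i (f i), Equiv.ofBijective f hf, hfA, fun i j => ?_⟩
  rw [Equiv.ofBijective_apply]
  split_ifs with hj
  · exact congrArg (A i) hj.symm
  · obtain ⟨i', rfl⟩ := hf.2 j
    by_contra hA
    exact hj (congrArg f (eq_of_pos_of_pos_of_mMul_eq_one hAB (pos_of_ne_zero hA) (hfB i')))
end
end

section
/- Let A, B ∈ M_n(ℝ₊) each be triangularizable over the max algebra. Then A and B are simultaneously triangularizable (some permutation matrix P makes both P⁻¹AP and P⁻¹BP upper triangular) if and only if the digraph G_{A⊕B} of the entrywise maximum has no directed cycle on at least two vertices. -/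
open Matrix Finset

noncomputable section

/-!
A permutation σ triangularizes `M` exactly when `σ⁻¹` is monotone along reachability in `G_M`.
So `M` is triangularizable iff reachability is antisymmetric, i.e. `G_M` has no cycle through two
vertices, and then any linear extension of reachability numbers the vertices as required.
A single permutation triangularizes both `A` and `B` iff it triangularizes `A ⊕ B`, which has the
union of their supports.
-/

theorem Fintype.exists_equiv_fin_of_isPartialOrder {α : Type*} [Fintype α] {n : ℕ}
    (hn : Fintype.card α = n) (r : α → α → Prop) [IsPartialOrder α r] :
    ∃ e : Fin n ≃ α, ∀ i j, r (e i) (e j) → i ≤ j := by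
  let : PartialOrder α :=
    { le := r
      le_refl := refl_of r
      le_trans := fun _ _ _ => trans_of r
      le_antisymm := fun _ _ => antisymm_of r }
  let : Fintype (LinearExtension α) := ‹Fintype α›
  let e := monoEquivOfFin (LinearExtension α) hn
  refine ⟨e.toEquiv, fun i j hij => e.le_iff_le.mp ?_⟩
  exact toLinearExtension.monotone (α := α) hij

section

variable {n : ℕ}

theorem upperTri_conjP_msup_iff (σ : Equiv.Perm (Fin n)) (A B : Matrix (Fin n) (Fin n) NNReal) :
    UpperTri (conjP σ (msup A B)) ↔ UpperTri (conjP σ A) ∧ UpperTri (conjP σ B) := by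
  simp only [UpperTri, conjP, msup, ← forall_and, ← NNReal.bot_eq_zero, _root_.max_eq_bot]

theorem simTriangularizable_iff_triangularizable_msup (A B : Matrix (Fin n) (Fin n) NNReal) :
    SimTriangularizable A B ↔ Triangularizable (msup A B) := by
  simp only [SimTriangularizable, Triangularizable, upperTri_conjP_msup_iff]

theorem noMultiVertexCycle_iff_reflTransGen_antisymm (M : Matrix (Fin n) (Fin n) NNReal) :
    NoMultiVertexCycle M ↔ ∀ a b, Relation.ReflTransGen (Edge M) a b →
      Relation.ReflTransGen (Edge M) b a → a = b := by
  simp only [NoMultiVertexCycle, Relation.reflTransGen_iff_eq_or_transGen]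
  grind

theorem UpperTri.symm_le_of_reflTransGen_edge {σ : Equiv.Perm (Fin n)} {M : Matrix (Fin n) (Fin n) NNReal}
    (hM : UpperTri (conjP σ M)) {a b : Fin n} (hab : Relation.ReflTransGen (Edge M) a b) :
    σ.symm a ≤ σ.symm b := by
  have hedge : ∀ a b, Edge M a b → σ.symm a ≤ σ.symm b := fun a b hedge => by
    by_contra! hlt
    have := hM _ _ hlt
    simp only [conjP, Equiv.apply_symm_apply] at this
    exact hedge.ne' this
  simpa only [Relation.reflTransGen_eq_self] using Relation.ReflTransGen.lift σ.symm hedge a b hab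

theorem triangularizable_iff_noMultiVertexCycle (M : Matrix (Fin n) (Fin n) NNReal) :
    Triangularizable M ↔ NoMultiVertexCycle M := by
  rw [noMultiVertexCycle_iff_reflTransGen_antisymm]
  constructor
  · rintro ⟨σ, hσ⟩ a b hab hba
    exact σ.symm.injective (le_antisymm (hσ.symm_le_of_reflTransGen_edge hab) (hσ.symm_le_of_reflTransGen_edge hba))
  · intro hanti
    have : IsPartialOrder (Fin n) (Relation.ReflTransGen (Edge M)) :=
      { refl := fun _ => .refl
        trans := fun _ _ _ => Relation.ReflTransGen.trans
        antisymm := hanti }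
    obtain ⟨σ, hσ⟩ := Fintype.exists_equiv_fin_of_isPartialOrder (Fintype.card_fin n)
      (Relation.ReflTransGen (Edge M))
    refine ⟨σ, fun i j hji => ?_⟩
    by_contra hne
    exact hji.not_ge (hσ i j (.single (pos_iff_ne_zero.mpr hne)))

end

theorem stmt4_general {n : ℕ} (A B : Matrix (Fin n) (Fin n) NNReal) :
    SimTriangularizable A B ↔ NoMultiVertexCycle (msup A B) := by
  rw [simTriangularizable_iff_triangularizable_msup, triangularizable_iff_noMultiVertexCycle]

theorem stmt4 {n : ℕ} (A B : Matrix (Fin n) (Fin n) NNReal)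
    (hA : Triangularizable A) (hB : Triangularizable B) :
    SimTriangularizable A B ↔ NoMultiVertexCycle (msup A B) :=
  stmt4_general A B
end
end

section
/- If A, B ∈ M_n(ℝ₊) are triangularizable matrices over the max algebra and every edge of G_A is an edge of G_B (or vice versa), then A and B are simultaneously triangularizable. -/
open Matrix Finset

noncomputable section

theorem UpperTri.of_edge_imp {n : ℕ} {A B : Matrix (Fin n) (Fin n) NNReal}
    (hAB : ∀ i j, Edge A i j → Edge B i j) {σ : Equiv.Perm (Fin n)}
    (hB : UpperTri (conjP σ B)) : UpperTri (conjP σ A) := fun i j hji =>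
  nonpos_iff_eq_zero.mp <| not_lt.mp fun hA => (hAB _ _ hA).ne' (hB i j hji)

theorem SimTriangularizable.symm {n : ℕ} {A B : Matrix (Fin n) (Fin n) NNReal}
    (h : SimTriangularizable A B) : SimTriangularizable B A :=
  let ⟨σ, hA, hB⟩ := h
  ⟨σ, hB, hA⟩

theorem Triangularizable.simTriangularizable_of_edge_imp {n : ℕ}
    {A B : Matrix (Fin n) (Fin n) NNReal} (hB : Triangularizable B)
    (hAB : ∀ i j, Edge A i j → Edge B i j) : SimTriangularizable A B :=
  let ⟨σ, hσ⟩ := hB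
  ⟨σ, hσ.of_edge_imp hAB, hσ⟩

theorem stmt5 {n : ℕ} (A B : Matrix (Fin n) (Fin n) NNReal)
    (hA : Triangularizable A) (hB : Triangularizable B)
    (hsub : (∀ i j, Edge A i j → Edge B i j) ∨ (∀ i j, Edge B i j → Edge A i j)) :
    SimTriangularizable A B := by
  rcases hsub with hAB | hBA
  · exact hB.simTriangularizable_of_edge_imp hAB
  · exact (hA.simTriangularizable_of_edge_imp hBA).symm
end
end

section
/- Let A, B ∈ M_n(ℝ₊) be nilpotent in the max algebra (so their digraphs are acyclic). If the digraph G_{A⊕B} contains a directed cycle, then the max commutator C = (A⊗B) ⊕ (B⊗A) has some positive entry C_{uw} > 0, where u lies on the cycle. -/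
open Matrix Finset

noncomputable section

/-! A max-plus nilpotent matrix has an acyclic digraph: `(A^k)_{il} > 0` exactly when there is a
walk of length `k` from `i` to `l`, and a vertex on a cycle starts walks of every length.
Hence a cycle of `G_{A⊕B}` cannot use edges of one colour only;
so somewhere along it an edge of `A` is followed by an edge of `B` or vice versa, and the vertex
where this happens carries a positive row of `(A ⊗ B) ⊕ (B ⊗ A)`. -/

namespace Relation

variable {α : Type*} {r s : α → α → Prop}

theorem TransGen.exists_rel_transGen_self {a : α} (h : TransGen r a a) :
    ∃ b, r a b ∧ TransGen r b b := by
  obtain ⟨b, hab, hba⟩ := TransGen.head'_iff.mp h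
  exact ⟨b, hab, .tail' hba hab⟩

theorem TransGen.sup_cases {x y : α} (h : TransGen (r ⊔ s) x y) :
    TransGen r x y ∨ TransGen s x y ∨
      ∃ u, ReflTransGen (r ⊔ s) x u ∧ TransGen (r ⊔ s) u y ∧
        ∃ a b, r u a ∧ s a b ∨ s u a ∧ r a b := by
  induction h using TransGen.head_induction_on with
  | single hxy => exact hxy.elim (Or.inl ∘ .single) (Or.inr ∘ Or.inl ∘ .single)
  | @head x c hxc hcy ih =>
    have hxy : TransGen (r ⊔ s) x y := .head hxc hcy
    rcases ih with hr | hs | ⟨u, hcu, huy, hswitch⟩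
    · rcases hxc with hxc | hxc
      · exact Or.inl (.head hxc hr)
      · obtain ⟨a, hca, -⟩ := TransGen.head'_iff.mp hr
        exact Or.inr (Or.inr ⟨x, .refl, hxy, c, a, Or.inr ⟨hxc, hca⟩⟩)
    · rcases hxc with hxc | hxc
      · obtain ⟨a, hca, -⟩ := TransGen.head'_iff.mp hs
        exact Or.inr (Or.inr ⟨x, .refl, hxy, c, a, Or.inl ⟨hxc, hca⟩⟩)
      · exact Or.inr (Or.inl (.head hxc hs))
    · exact Or.inr (Or.inr ⟨u, .head hxc hcu, huy, hswitch⟩)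

end Relation

section MaxPlus

variable {n : ℕ} {A B : Matrix (Fin n) (Fin n) NNReal}

theorem mMul_pos_iff {i j : Fin n} : 0 < mMul A B i j ↔ ∃ k, Edge A i k ∧ Edge B k j := by
  simp [mMul, Edge, Finset.lt_sup_iff, pos_iff_ne_zero]

theorem edge_msup : Edge (msup A B) = Edge A ⊔ Edge B := by
  ext i j
  simp [Edge, msup]

theorem exists_mPow_pos_of_transGen_self {i : Fin n} (h : Relation.TransGen (Edge A) i i)
    (k : ℕ) : ∃ l, 0 < mPow A k i l := by
  induction k generalizing i with
  | zero => exact ⟨i, by simp [mPow]⟩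
  | succ k ih =>
    obtain ⟨j, hij, hj⟩ := h.exists_rel_transGen_self
    obtain ⟨l, hjl⟩ := ih hj
    exact ⟨l, mMul_pos_iff.mpr ⟨j, hij, hjl⟩⟩

theorem MNilpotent.not_transGen_self (hA : MNilpotent A) (i : Fin n) :
    ¬ Relation.TransGen (Edge A) i i := fun h => by
  obtain ⟨k, hk⟩ := hA
  obtain ⟨l, hl⟩ := exists_mPow_pos_of_transGen_self h k
  simp [hk] at hl

end MaxPlus

theorem stmt8 {n : ℕ} (A B : Matrix (Fin n) (Fin n) NNReal)
    (hA : MNilpotent A) (hB : MNilpotent B)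
    (v : Fin n) (hcyc : Relation.TransGen (Edge (msup A B)) v v) :
    ∃ u w : Fin n,
      (u = v ∨ (Relation.TransGen (Edge (msup A B)) v u ∧
                Relation.TransGen (Edge (msup A B)) u v)) ∧
      0 < msup (mMul A B) (mMul B A) u w := by
  rw [edge_msup] at hcyc ⊢
  rcases hcyc.sup_cases with hAcyc | hBcyc | ⟨u, hvu, huv, a, w, hswitch⟩
  · exact absurd hAcyc (hA.not_transGen_self v)
  · exact absurd hBcyc (hB.not_transGen_self v)
  · refine ⟨u, w, ?_, ?_⟩
    · rcases Relation.reflTransGen_iff_eq_or_transGen.mp hvu with rfl | hvu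
      · exact Or.inl rfl
      · exact Or.inr ⟨hvu, huv⟩
    · exact lt_max_iff.mpr (hswitch.imp (fun h => mMul_pos_iff.mpr ⟨a, h⟩)
        (fun h => mMul_pos_iff.mpr ⟨a, h⟩))
end
end

section
/- If A, B ∈ M_n(ℝ₊) are simultaneously triangularizable over the max algebra via a permutation matrix P, then their characteristic polynomial P_{A,B}(z₁,z₂) = tdet(I ⊕ z₁A ⊕ z₂B) equals the product over i of (1 ⊕ a'_{ii}z₁ ⊕ b'_{ii}z₂), where a'_{ii}, b'_{ii} are the diagonal entries of P⁻¹AP, P⁻¹BP; in particular P_{A,B} is a product of n linear factors. -/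
open Matrix Finset

noncomputable section

/-!
Conjugating by a permutation only relabels the permutations over which `tdet` maximizes, and
`I ⊕ z₁A ⊕ z₂B` is upper triangular whenever `A` and `B` are. For a triangular matrix every
permutation other than the identity picks a zero entry below the diagonal, so, as in classical
algebra, the tropical determinant is the product of the diagonal entries.
-/

theorem Equiv.Perm.eq_one_of_forall_le_apply {α : Type*} [Finite α] [PartialOrder α]
    (τ : Equiv.Perm α) (h : ∀ i, i ≤ τ i) : τ = 1 := by
  ext i
  have hmono : Monotone fun k : ℕ => (τ ^ k) i :=
    monotone_nat_of_le_succ fun k => by simpa only [pow_succ', Equiv.Perm.mul_apply] using h _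
  refine le_antisymm ?_ (h i)
  -- the orbit of `i` climbs weakly and returns to `i` after `orderOf τ` steps
  calc τ i = (τ ^ 1) i := by rw [pow_one]
    _ ≤ (τ ^ orderOf τ) i := hmono (orderOf_pos τ)
    _ = i := by rw [pow_orderOf_eq_one, Equiv.Perm.one_apply]

lemma tdet_conjP {n : ℕ} (σ : Equiv.Perm (Fin n)) (M : Matrix (Fin n) (Fin n) NNReal) :
    tdet (conjP σ M) = tdet M := by
  unfold tdet conjP
  conv_rhs => rw [← Finset.map_univ_equiv (MulAut.conj σ).toEquiv, Finset.sup_map]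
  congr 1
  funext τ
  exact Fintype.prod_equiv σ _ _ fun i => by simp [Equiv.Perm.mul_apply]

lemma tdet_of_upperTri {n : ℕ} {M : Matrix (Fin n) (Fin n) NNReal} (hM : UpperTri M) :
    tdet M = ∏ i, M i i := by
  unfold tdet
  refine le_antisymm (Finset.sup_le fun τ _ => ?_) ?_
  · by_cases hτ : ∃ i, τ i < i
    · obtain ⟨i, hi⟩ := hτ
      rw [Finset.prod_eq_zero (Finset.mem_univ i) (hM i (τ i) hi)]
      exact bot_le
    · simp only [not_exists, not_lt] at hτ
      rw [τ.eq_one_of_forall_le_apply hτ]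
      rfl
  · simpa using Finset.le_sup (f := fun τ : Equiv.Perm (Fin n) => ∏ i, M i (τ i))
      (Finset.mem_univ 1)

lemma conjP_Mz {n : ℕ} (A B : Matrix (Fin n) (Fin n) NNReal) (z₁ z₂ : NNReal)
    (σ : Equiv.Perm (Fin n)) :
    conjP σ (Mz A B z₁ z₂) = Mz (conjP σ A) (conjP σ B) z₁ z₂ := by
  ext i j
  simp only [conjP, Mz, Matrix.one_apply, σ.injective.eq_iff]

lemma Mz_apply_self {n : ℕ} (A B : Matrix (Fin n) (Fin n) NNReal) (z₁ z₂ : NNReal)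
    (i : Fin n) : Mz A B z₁ z₂ i i = max (max 1 (A i i * z₁)) (B i i * z₂) := by
  simp only [Mz, Matrix.one_apply_eq, mul_comm]

lemma upperTri_Mz {n : ℕ} {A B : Matrix (Fin n) (Fin n) NNReal} (hA : UpperTri A)
    (hB : UpperTri B) (z₁ z₂ : NNReal) : UpperTri (Mz A B z₁ z₂) := by
  intro i j hji
  simp [Mz, Matrix.one_apply_ne hji.ne', hA i j hji, hB i j hji]

theorem stmt14 {n : ℕ} (A B : Matrix (Fin n) (Fin n) NNReal)
    (σ : Equiv.Perm (Fin n))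
    (hA : UpperTri (conjP σ A)) (hB : UpperTri (conjP σ B)) :
    ∀ z₁ z₂ : NNReal,
      tdet (Mz A B z₁ z₂) =
        ∏ i, max (max 1 (conjP σ A i i * z₁)) (conjP σ B i i * z₂) := by
  intro z₁ z₂
  rw [← tdet_conjP σ, conjP_Mz, tdet_of_upperTri (upperTri_Mz hA hB z₁ z₂)]
  simp only [Mz_apply_self]
end
end
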